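/- The number of S-Motzkin paths of length 3n (i.e., Motzkin paths with n up steps, n down steps, and n horizontal steps such that deleting all down steps yields the word (hu)^n) equals (1/(2n+1)) * C(3n, n). -/

import Mathlib

inductive Step : Type
  | u : Step
  | d : Step
  | h : Step
deriving DecidableEq, Repr

def stepVal : Step → ℤ
  | Step.u => 1
  | Step.d => -1
  | Step.h => 0

/-- Sum of step values (final height) of a word. -/
def hsum (w : List Step) : ℤ := (w.map stepVal).sum

/-- All prefixes have nonnegative height. -/
def NonnegPrefixes (w : List Step) : Prop := ∀ p : List Step, p <+: w → 0 ≤ hsum p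

/-- A Motzkin path: nonnegative prefix heights and total height 0. -/
def IsMotzkin (w : List Step) : Prop := NonnegPrefixes w ∧ hsum w = 0

/-- The word (hu)^n. -/
def huWord (n : ℕ) : List Step := (List.replicate n [Step.h, Step.u]).flatten

/-- An S-Motzkin path with n up, n down, n horizontal steps:
a Motzkin path whose subword of non-down steps is (hu)^n. -/
def IsSMotzkin (n : ℕ) (w : List Step) : Prop :=
  IsMotzkin w ∧ w.count Step.u = n ∧ w.count Step.d = n ∧ w.count Step.h = n ∧
    w.filter (fun s => s ≠ Step.d) = huWord n

/-- A nonempty word over {h, u}. -/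
def HUBlock (A : List Step) : Prop := A ≠ [] ∧ ∀ s ∈ A, s = Step.h ∨ s = Step.u

/-- Glue blocks A_i with runs of d_i down steps: A_0 d^{d_1} A_1 d^{d_2} ... -/
def joinAM (As : List (List Step)) (ds : List ℕ) : List Step :=
  (List.zipWith (fun A k => A ++ List.replicate k Step.d) As ds).flatten

/-- w decomposes as A_0 D_1 A_1 D_2 ... A_{t-1} D_t with A_i nonempty over {h,u}
and D_i nonempty runs of down steps. -/
def AMDecomp (w : List Step) (As : List (List Step)) (ds : List ℕ) : Prop :=
  As.length = ds.length ∧ (∀ A ∈ As, HUBlock A) ∧ (∀ k ∈ ds, 0 < k) ∧ w = joinAM As ds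

/-- An Asinowski–Mansour path with n up, n down, n horizontal steps. -/
def IsAM (n : ℕ) (w : List Step) : Prop :=
  IsMotzkin w ∧ w.count Step.u = n ∧ w.count Step.d = n ∧ w.count Step.h = n ∧
    ∃ As ds, AMDecomp w As ds

/-- A Dyck path with n up and n down steps, encoded over the alphabet Step. -/
def IsDyck (n : ℕ) (w : List Step) : Prop :=
  (∀ s ∈ w, s = Step.u ∨ s = Step.d) ∧ w.count Step.u = n ∧ w.count Step.d = n ∧
    NonnegPrefixes w

/-- Height of the path at the start of step i. -/
def heightAt (w : List Step) (i : ℕ) : ℤ := hsum (w.take i)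

/-- Two horizontal steps at positions i < j, at the same height, with all steps
strictly between them at or above that height. -/
def Matched (w : List Step) (i j : ℕ) : Prop :=
  i < j ∧ w[i]? = some Step.h ∧ w[j]? = some Step.h ∧
    heightAt w i = heightAt w j ∧ ∀ k, i < k → k < j → heightAt w i ≤ heightAt w k

/-- Positions of the horizontal steps of w, from left to right. -/
def hPositions (w : List Step) : List ℕ := List.findIdxs (fun s => s = Step.h) w

/-- Lexicographic (weak) order on lists of naturals. -/
def LexLe (l l' : List ℕ) : Prop := l = l' ∨ List.Lex (· < ·) l l'

/-- w is an S-Motzkin word obtained by inserting horizontal steps into D. -/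
def ValidIns (D w : List Step) : Prop :=
  (∃ m, IsSMotzkin m w) ∧ w.filter (fun s => s ≠ Step.h) = D

/-- w is the greedy h-insertion into D: each h leftmost, i.e. the list of positions
of the h's is lexicographically minimal among all valid insertions. -/
def GreedyFor (D w : List Step) : Prop :=
  ValidIns D w ∧ ∀ w', ValidIns D w' → LexLe (hPositions w) (hPositions w')

/-! The non-down steps of an S-Motzkin path are forced to read `huhu⋯`, so the path is determined
by its pattern of down and non-down steps. After `i` non-down and `j` down steps the height is
`⌊i/2⌋ - j`, which is nonnegative iff `i - 2j ≥ 0`: weighting non-down steps by `1` and down steps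
by `-2`, the Motzkin condition says that all prefix sums are nonnegative. Prepending a `1` turns
these words bijectively into the words with `2n+1` ones and `n` minus-twos whose nonempty prefixes
all have positive sum. By Raney's cycle lemma exactly one of the `3n+1` rotations of a word of
total weight `1` has this property, so there are `C(3n+1, n)/(3n+1) = C(3n, n)/(2n+1)` of them. -/

namespace SMotzkin

theorem sum_take_rotate {M : Type*} [AddCommGroup M] {l : List M} {m k : ℕ} (hm : m ≤ l.length)
    (hk : k ≤ l.length) :
    ((l.rotate m).take k).sum =
      (l.take (m + k)).sum - (l.take m).sum + (l.take (k - (l.length - m))).sum := by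
  rw [List.rotate_eq_drop_append_take hm, List.take_append, List.sum_append, List.length_drop,
    List.take_add, List.sum_append, List.take_take, min_eq_left (by omega)]
  abel

theorem exists_last_argmin {β : Type*} [LinearOrder β] (S : ℕ → β) {L : ℕ} (hL : 0 < L) :
    ∃ j < L, (∀ i < L, S j ≤ S i) ∧ ∀ i, j < i → i < L → S j < S i := by
  obtain ⟨i₀, hi₀, hmin⟩ := (Finset.range L).exists_min_image S ⟨0, by simpa⟩
  obtain ⟨j, hj, hmax⟩ :=
    ((Finset.range L).filter (S · = S i₀)).exists_max_image id ⟨i₀, by simpa using hi₀⟩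
  simp only [Finset.mem_filter, Finset.mem_range] at hj hmax hmin
  refine ⟨j, hj.1, fun i hi => hj.2 ▸ hmin i hi, fun i hji hi => ?_⟩
  refine hj.2 ▸ lt_of_le_of_ne (hmin i hi) fun he => ?_
  exact absurd (hmax i ⟨hi, he.symm⟩) (by simpa using hji)

def PrefixPositive (l : List ℤ) : Prop := ∀ k, 0 < k → k ≤ l.length → 0 < (l.take k).sum

theorem prefixPositive_one_cons_iff (l : List ℤ) :
    PrefixPositive (1 :: l) ↔ ∀ k, 0 ≤ (l.take k).sum := by
  constructor
  · intro h k
    rcases le_or_gt k l.length with hk | hk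
    · simpa [Int.lt_iff_add_one_le, add_comm] using h (k + 1) (by omega) (by simpa)
    · simpa [List.take_of_length_le hk.le, Int.lt_iff_add_one_le, add_comm]
        using h (l.length + 1) (by omega) (by simp)
  · rintro h (_ | k) hk -
    · omega
    · simpa [Int.lt_iff_add_one_le, add_comm] using h k

/-- **Raney's lemma**, existence half: rotate to just after the last minimum of the
prefix sums. -/
theorem exists_prefixPositive_rotate {l : List ℤ} (hsum : l.sum = 1) :
    ∃ j < l.length, PrefixPositive (l.rotate j) := by
  have hL : 0 < l.length := List.length_pos_iff.2 (by rintro rfl; simp at hsum)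
  obtain ⟨j, hj, hmin, hlast⟩ := exists_last_argmin (fun i => (l.take i).sum) hL
  have hj0 : (l.take j).sum ≤ 0 := by simpa using hmin 0 hL
  refine ⟨j, hj, fun k hk hkl => ?_⟩
  rw [List.length_rotate] at hkl
  rw [sum_take_rotate hj.le hkl]
  rcases lt_or_ge (j + k) l.length with h | h
  · have := hlast (j + k) (by omega) h
    simp [show k - (l.length - j) = 0 by omega]
    omega
  · have := hmin (k - (l.length - j)) (by omega)
    rw [List.take_of_length_le h, hsum]
    omega

theorem PrefixPositive.eq_zero_of_rotate {l : List ℤ} (hl : PrefixPositive l) (hsum : l.sum ≤ 1)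
    {m : ℕ} (hm : m < l.length) (hrot : PrefixPositive (l.rotate m)) : m = 0 := by
  by_contra h0
  have hdrop := hrot (l.length - m) (by omega) (by simp)
  rw [sum_take_rotate hm.le (Nat.sub_le _ _), Nat.add_sub_cancel' hm.le, List.take_length,
    Nat.sub_self, List.take_zero, List.sum_nil] at hdrop
  have := hl m (by omega) hm.le
  omega

theorem eq_rotate_sub_of_rotate_eq {α : Type*} {l l' : List α} {k k' : ℕ} (hk : k ≤ k')
    (h : l.rotate k = l'.rotate k') : l = l'.rotate (k' - k) := by
  rw [← List.rotate_eq_rotate (n := k), List.rotate_rotate, Nat.sub_add_cancel hk, h]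

/-- Each rotation class has exactly `L` members, one of which has positive prefix sums. -/
theorem card_eq_mul_card_prefixPositive {α : Type*} (f : α → ℤ) (S : Set (List α)) (L : ℕ)
    (hrot : ∀ l ∈ S, ∀ k, l.rotate k ∈ S) (hlen : ∀ l ∈ S, l.length = L)
    (hsum : ∀ l ∈ S, (l.map f).sum = 1) :
    Nat.card S = L * Nat.card {l | l ∈ S ∧ PrefixPositive (l.map f)} := by
  rw [mul_comm, ← Nat.card_fin L, ← Nat.card_prod]
  symm
  refine Nat.card_eq_of_bijective
    (fun p => ⟨p.1.1.rotate p.2, hrot _ p.1.2.1 _⟩) ⟨?_, fun ⟨v, hv⟩ => ?_⟩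
  · have key : ∀ g g' : {l | l ∈ S ∧ PrefixPositive (l.map f)}, ∀ k k' : Fin L, k ≤ k' →
        g.1.rotate k = g'.1.rotate k' → g = g' ∧ k = k' := by
      rintro ⟨g, hgS, hg⟩ ⟨g', hg'S, hg'⟩ k k' hkk h
      have hgg' := eq_rotate_sub_of_rotate_eq hkk h
      have h0 : (k' : ℕ) - k = 0 := hg'.eq_zero_of_rotate (hsum g' hg'S).le
        (by simp [hlen g' hg'S]; omega) (by rw [← List.map_rotate, ← hgg']; exact hg)
      rw [h0, List.rotate_zero] at hgg'
      exact ⟨Subtype.ext hgg', Fin.ext (by omega)⟩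
    rintro ⟨g, k⟩ ⟨g', k'⟩ h
    have h' : g.1.rotate k = g'.1.rotate k' := congrArg Subtype.val h
    rcases le_total k k' with hkk | hkk
    · obtain ⟨rfl, rfl⟩ := key g g' k k' hkk h'
      rfl
    · obtain ⟨rfl, rfl⟩ := key g' g k' k hkk h'.symm
      rfl
  · obtain ⟨j, hj, hpos⟩ := exists_prefixPositive_rotate (hsum v hv)
    rw [List.length_map, hlen v hv] at hj
    refine ⟨(⟨v.rotate j, hrot v hv j, by rwa [List.map_rotate]⟩,
      ⟨(L - j) % L, Nat.mod_lt _ (by omega)⟩), Subtype.ext ?_⟩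
    change (v.rotate j).rotate ((L - j) % L) = v
    rw [← hlen _ (hrot v hv j), List.rotate_mod, List.rotate_rotate, List.length_rotate,
      Nat.add_sub_cancel' (hlen v hv ▸ hj.le), List.rotate_length]

def balancedWords (a b : ℕ) : Set (List Bool) := {v | v.count true = a ∧ v.count false = b}

theorem length_of_mem_balancedWords {a b : ℕ} {v : List Bool} (hv : v ∈ balancedWords a b) :
    v.length = a + b := by
  rw [← List.count_true_add_count_false, hv.1, hv.2]

instance (a b : ℕ) : Finite (balancedWords a b) :=
  ((List.finite_length_eq Bool (a + b)).subset fun _ => length_of_mem_balancedWords).to_subtype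

theorem rotate_mem_balancedWords {a b : ℕ} {v : List Bool} (hv : v ∈ balancedWords a b)
    (k : ℕ) : v.rotate k ∈ balancedWords a b := by
  simpa only [balancedWords, Set.mem_ofPred_eq, (List.rotate_perm v k).count_eq] using hv

theorem eq_replicate_of_count_not_eq_zero {x : Bool} {v : List Bool} (h : v.count (!x) = 0) :
    v = List.replicate (v.count x) x := by
  have hall : ∀ b ∈ v, b = x := fun b hb => by
    cases b <;> cases x <;> simp_all [List.count_eq_zero]
  exact List.eq_replicate_iff.2 ⟨(List.count_eq_length.2 fun b hb => (hall b hb).symm).symm, hall⟩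

theorem balancedWords_zero_left (b : ℕ) : balancedWords 0 b = {List.replicate b false} := by
  ext v
  refine ⟨fun ⟨ht, hf⟩ => hf ▸ eq_replicate_of_count_not_eq_zero (x := false) ht, ?_⟩
  rintro rfl
  simp [balancedWords, List.count_replicate]

theorem balancedWords_zero_right (a : ℕ) : balancedWords a 0 = {List.replicate a true} := by
  ext v
  refine ⟨fun ⟨ht, hf⟩ => ht ▸ eq_replicate_of_count_not_eq_zero (x := true) hf, ?_⟩
  rintro rfl
  simp [balancedWords, List.count_replicate]

def consEquiv (a b : ℕ) :
    balancedWords a (b + 1) ⊕ balancedWords (a + 1) b ≃ balancedWords (a + 1) (b + 1) where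
  toFun := Sum.elim (fun v => ⟨true :: v, by simpa [balancedWords] using v.2⟩)
    (fun v => ⟨false :: v, by simpa [balancedWords] using v.2⟩)
  invFun
    | ⟨true :: v, h⟩ => .inl ⟨v, by simpa [balancedWords] using h⟩
    | ⟨false :: v, h⟩ => .inr ⟨v, by simpa [balancedWords] using h⟩
    | ⟨[], h⟩ => absurd h.1 (by simp)
  left_inv := by rintro (⟨v, hv⟩ | ⟨v, hv⟩) <;> rfl
  right_inv := by rintro ⟨_ | ⟨_ | _, v⟩, h⟩ <;> first | rfl | exact absurd h.1 (by simp)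

theorem card_balancedWords : ∀ a b : ℕ, Nat.card (balancedWords a b) = (a + b).choose b
  | 0, b => by simp [balancedWords_zero_left]
  | a + 1, 0 => by simp [balancedWords_zero_right]
  | a + 1, b + 1 => by
    rw [← Nat.card_congr (consEquiv a b), Nat.card_sum, card_balancedWords a (b + 1),
      card_balancedWords (a + 1) b, show a + 1 + (b + 1) = a + (b + 1) + 1 by omega,
      Nat.choose_succ_succ, show a + (b + 1) = a + 1 + b by omega, add_comm]

def weight : Bool → ℤ
  | true => 1
  | false => -2

theorem sum_map_weight (v : List Bool) :
    (v.map weight).sum = v.count true - 2 * v.count false := by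
  induction v with
  | nil => simp
  | cons b v ih => cases b <;> simp [ih, weight] <;> ring

/-- Łukasiewicz words of ternary trees with `n` internal nodes. -/
def ternaryWords (n : ℕ) : Set (List Bool) :=
  {v | v ∈ balancedWords (2 * n + 1) n ∧ PrefixPositive (v.map weight)}

theorem card_ternaryWords (n : ℕ) :
    Nat.card (ternaryWords n) = (3 * n).choose n / (2 * n + 1) := by
  have hcycle : (3 * n + 1).choose n = (3 * n + 1) * Nat.card (ternaryWords n) := by
    rw [show 3 * n + 1 = 2 * n + 1 + n by ring, ← card_balancedWords]
    refine card_eq_mul_card_prefixPositive weight _ _ (fun _ hv => rotate_mem_balancedWords hv)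
      (fun _ => length_of_mem_balancedWords) fun v hv => ?_
    rw [sum_map_weight, hv.1, hv.2]
    push_cast
    ring
  have hchoose := Nat.choose_mul_succ_eq (3 * n) n
  rw [show 3 * n + 1 - n = 2 * n + 1 by omega, hcycle] at hchoose
  have hmul : (3 * n).choose n = Nat.card (ternaryWords n) * (2 * n + 1) :=
    Nat.eq_of_mul_eq_mul_right (by omega : 0 < 3 * n + 1) (by rw [hchoose]; ring)
  rw [hmul, Nat.mul_div_cancel _ (by omega)]

def nonDown (s : Step) : Bool := s ≠ Step.d

@[simp] theorem nonDown_u : nonDown Step.u = true := rfl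
@[simp] theorem nonDown_d : nonDown Step.d = false := rfl
@[simp] theorem nonDown_h : nonDown Step.h = true := rfl

theorem hsum_eq_count_sub_count (w : List Step) :
    hsum w = w.count Step.u - w.count Step.d := by
  induction w with
  | nil => rfl
  | cons s w ih => cases s <;> simp [hsum, stepVal] at ih ⊢ <;> omega

theorem huWord_succ (n : ℕ) : huWord (n + 1) = Step.h :: Step.u :: huWord n := by
  simp [huWord, List.replicate_succ]

theorem count_u_of_prefix_huWord {n : ℕ} {q : List Step} (hq : q <+: huWord n) :
    q.count Step.u = q.length / 2 := by
  induction n generalizing q with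
  | zero => simp [List.prefix_nil.1 (by simpa [huWord] using hq)]
  | succ n ih =>
    rw [huWord_succ] at hq
    rcases q with _ | ⟨s, _ | ⟨t, q⟩⟩
    · rfl
    · obtain rfl : s = Step.h := (List.cons_prefix_cons.1 hq).1
      rfl
    · obtain ⟨rfl, rfl, hq'⟩ : s = Step.h ∧ t = Step.u ∧ q <+: huWord n := by
        simpa [List.cons_prefix_cons] using hq
      simp [ih hq']
      omega

theorem count_true_map_nonDown (w : List Step) :
    (w.map nonDown).count true = (w.filter nonDown).length := by
  induction w with
  | nil => rfl
  | cons s w ih => cases s <;> simp [List.filter_cons, ih]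

theorem count_false_map_nonDown (w : List Step) :
    (w.map nonDown).count false = w.count Step.d := by
  induction w with
  | nil => rfl
  | cons s w ih => cases s <;> simp [ih]

theorem hsum_nonneg_iff {n : ℕ} {q : List Step} (hq : q.filter nonDown <+: huWord n) :
    0 ≤ hsum q ↔ 0 ≤ ((q.map nonDown).map weight).sum := by
  rw [hsum_eq_count_sub_count, sum_map_weight, count_true_map_nonDown, count_false_map_nonDown,
    ← List.count_filter (p := nonDown) rfl, count_u_of_prefix_huWord hq]
  omega

theorem nonnegPrefixes_iff_take (w : List Step) :
    NonnegPrefixes w ↔ ∀ k, 0 ≤ hsum (w.take k) :=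
  ⟨fun h k => h _ (List.take_prefix k w),
    fun h p hp => List.prefix_iff_eq_take.1 hp ▸ h p.length⟩

theorem nonnegPrefixes_iff_prefixPositive {n : ℕ} {w : List Step}
    (hw : w.filter nonDown = huWord n) :
    NonnegPrefixes w ↔ PrefixPositive ((true :: w.map nonDown).map weight) := by
  rw [nonnegPrefixes_iff_take, List.map_cons, show weight true = 1 from rfl,
    prefixPositive_one_cons_iff]
  refine forall_congr' fun k => ?_
  rw [← List.map_take, ← List.map_take]
  exact hsum_nonneg_iff (hw ▸ (List.take_prefix k w).filter nonDown)

theorem isSMotzkin_iff_mem_ternaryWords {n : ℕ} {w : List Step}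
    (hw : w.filter nonDown = huWord n) :
    IsSMotzkin n w ↔ true :: w.map nonDown ∈ ternaryWords n := by
  have hu : w.count Step.u = n := by
    rw [← List.count_filter (p := nonDown) rfl, hw]
    simp [huWord, List.count_flatten]
  have hh : w.count Step.h = n := by
    rw [← List.count_filter (p := nonDown) rfl, hw]
    simp [huWord, List.count_flatten]
  constructor
  · rintro ⟨⟨hnn, -⟩, -, hd, -, -⟩
    refine ⟨⟨?_, ?_⟩, (nonnegPrefixes_iff_prefixPositive hw).1 hnn⟩
    · simp [count_true_map_nonDown, hw, huWord, mul_comm]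
    · simp [count_false_map_nonDown, hd]
  · rintro ⟨⟨-, hd⟩, hpos⟩
    simp only [List.count_cons, count_false_map_nonDown] at hd
    refine ⟨⟨(nonnegPrefixes_iff_prefixPositive hw).2 hpos, ?_⟩, hu, by simpa using hd, hh, hw⟩
    simp_all [hsum_eq_count_sub_count]

theorem eq_of_map_nonDown_eq_of_filter_eq {w w' : List Step}
    (hmap : w.map nonDown = w'.map nonDown) (hfilter : w.filter nonDown = w'.filter nonDown) :
    w = w' := by
  induction w generalizing w' with
  | nil => cases w' <;> simp_all
  | cons s w ih =>
    obtain _ | ⟨s', w'⟩ := w'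
    · simp at hmap
    · cases s <;> cases s' <;> simp [List.filter_cons] at hmap hfilter ⊢ <;>
        exact ih hmap hfilter

theorem exists_map_nonDown_eq_filter_eq (v : List Bool) {xs : List Step}
    (hxs : ∀ x ∈ xs, nonDown x) (hlen : v.count true = xs.length) :
    ∃ w : List Step, w.map nonDown = v ∧ w.filter nonDown = xs := by
  induction v generalizing xs with
  | nil => exact ⟨[], rfl, (List.eq_nil_of_length_eq_zero hlen.symm).symm⟩
  | cons b v ih =>
    cases b with
    | false =>
      obtain ⟨w, hmap, hfilter⟩ := ih hxs (by simpa using hlen)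
      exact ⟨Step.d :: w, by simp [hmap], by simp [hfilter]⟩
    | true =>
      obtain _ | ⟨x, xs⟩ := xs
      · simp at hlen
      have hx : nonDown x := hxs x (by simp)
      obtain ⟨w, hmap, hfilter⟩ :=
        ih (fun y hy => hxs y (List.mem_cons_of_mem x hy)) (by simpa using hlen)
      exact ⟨x :: w, by simp [hmap, hx], by simp [hx, hfilter]⟩

theorem exists_eq_true_cons_of_mem_ternaryWords {n : ℕ} {v : List Bool}
    (hv : v ∈ ternaryWords n) : ∃ t, v = true :: t := by
  obtain ⟨⟨hcount, -⟩, hpos⟩ := hv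
  obtain _ | ⟨b, t⟩ := v
  · simp at hcount
  have hfirst := hpos 1 one_pos (by simp)
  cases b
  · simp [weight] at hfirst
  · exact ⟨t, rfl⟩

theorem card_sMotzkin_eq_card_ternaryWords (n : ℕ) :
    Nat.card {w : List Step // IsSMotzkin n w} = Nat.card (ternaryWords n) := by
  have hfilter {w : List Step} (hw : IsSMotzkin n w) : w.filter nonDown = huWord n := hw.2.2.2.2
  refine Nat.card_eq_of_bijective (fun w => ⟨true :: w.1.map nonDown,
    (isSMotzkin_iff_mem_ternaryWords (hfilter w.2)).1 w.2⟩) ⟨?_, fun ⟨v, hv⟩ => ?_⟩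
  · rintro ⟨w, hw⟩ ⟨w', hw'⟩ h
    simp only [Subtype.mk.injEq, List.cons.injEq, true_and] at h
    exact Subtype.ext (eq_of_map_nonDown_eq_of_filter_eq h (by rw [hfilter hw, hfilter hw']))
  · obtain ⟨t, rfl⟩ := exists_eq_true_cons_of_mem_ternaryWords hv
    have hxs : ∀ x ∈ huWord n, nonDown x := by simp [huWord, or_imp, forall_and]
    have hlen : t.count true = (huWord n).length := by
      have := hv.1.1
      simp [huWord] at this ⊢
      omega
    obtain ⟨w, hmap, hw⟩ := exists_map_nonDown_eq_filter_eq t hxs hlen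
    exact ⟨⟨w, (isSMotzkin_iff_mem_ternaryWords hw).2 (hmap ▸ hv)⟩, by simp [hmap]⟩

end SMotzkin

/-- S-Motzkin paths of length 3n are counted by (1/(2n+1))·C(3n,n). -/
theorem smotzkin_count (n : ℕ) :
    Nat.card {w : List Step // IsSMotzkin n w} = Nat.choose (3 * n) n / (2 * n + 1) := by
  rw [SMotzkin.card_sMotzkin_eq_card_ternaryWords, SMotzkin.card_ternaryWords]
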